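/- Fix integers m ≥ 0 and i, j ≥ 1. Then e^{−b/2} ∫_0^{b/2} s^m L^m_{i-1}(s) L^m_{j-1}(s) e^{s} ds = O(b^{m+i+j−2}) as b → +∞. -/

import Mathlib

open Filter Asymptotics

/-- The associated Laguerre polynomial of degree `k` with parameter `m`. -/
noncomputable def laguerre (m k : ℕ) (s : ℝ) : ℝ :=
  ∑ l ∈ Finset.range (k + 1),
    ((-1 : ℝ) ^ l / l.factorial) * ((k + m).choose (k - l)) * s ^ l

lemma laguerre_continuous (m k : ℕ) : Continuous (laguerre m k) := by
  unfold laguerre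
  exact continuous_finset_sum _ fun l _ => by continuity

noncomputable def lagC (m k : ℕ) : ℝ :=
  ∑ l ∈ Finset.range (k + 1), ((k + m).choose (k - l) : ℝ) / l.factorial

lemma lagC_nonneg (m k : ℕ) : 0 ≤ lagC m k :=
  Finset.sum_nonneg fun l _ => by positivity

lemma laguerre_bound (m k : ℕ) {s : ℝ} (hs : 0 ≤ s) :
    |laguerre m k s| ≤ lagC m k * (1 + s) ^ k := by
  unfold laguerre lagC
  rw [Finset.sum_mul]
  refine (Finset.abs_sum_le_sum_abs _ _).trans (Finset.sum_le_sum fun l hl => ?_)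
  have hl' : l ≤ k := by simpa using Nat.lt_succ_iff.mp (Finset.mem_range.mp hl)
  have h1 : (1:ℝ) ≤ 1 + s := by linarith
  have hsl : s ^ l ≤ (1 + s) ^ k :=
    (pow_le_pow_left₀ hs (by linarith) l).trans (pow_le_pow_right₀ h1 hl')
  rw [abs_mul, abs_mul, abs_div, abs_pow, abs_neg, abs_one, one_pow]
  simp only [Nat.abs_cast, abs_pow, abs_of_nonneg hs]
  calc 1 / (l.factorial : ℝ) * ((k + m).choose (k - l) : ℝ) * s ^ l
      ≤ 1 / (l.factorial : ℝ) * ((k + m).choose (k - l) : ℝ) * (1 + s) ^ k := by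
        apply mul_le_mul_of_nonneg_left hsl; positivity
    _ = ((k + m).choose (k - l) : ℝ) / l.factorial * (1 + s) ^ k := by ring

/-- `e^{-b/2} ∫_0^{b/2} s^m L^m_{i-1}(s) L^m_{j-1}(s) e^{s} ds = O(b^{m+i+j-2})` as `b → ∞`. -/
theorem truncated_growing_integral_bigO (m i j : ℕ) (hi : 1 ≤ i) (hj : 1 ≤ j) :
    (fun b : ℝ =>
        Real.exp (-(b / 2)) *
          ∫ s in (0 : ℝ)..(b / 2),
            s ^ m * laguerre m (i - 1) s * laguerre m (j - 1) s * Real.exp s)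
      =O[atTop] fun b : ℝ => b ^ (m + i + j - 2) := by
  rw [isBigO_iff]
  refine ⟨lagC m (i - 1) * lagC m (j - 1), ?_⟩
  filter_upwards [eventually_ge_atTop (2 : ℝ)] with b hb
  set x := b / 2 with hx
  have hx0 : 0 ≤ x := by positivity
  have hd : m + i + j - 2 = m + (i - 1) + (j - 1) := by omega
  set d := m + i + j - 2 with hdef
  set C := lagC m (i - 1) * lagC m (j - 1) with hC
  have hC0 : 0 ≤ C := mul_nonneg (lagC_nonneg _ _) (lagC_nonneg _ _)
  -- pointwise bound on the integrand
  have hbound : ∀ s ∈ Set.uIoc (0:ℝ) x,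
      ‖s ^ m * laguerre m (i - 1) s * laguerre m (j - 1) s * Real.exp s‖
        ≤ C * (1 + x) ^ d * Real.exp s := by
    intro s hs
    rw [Set.uIoc_of_le hx0] at hs
    obtain ⟨hs0, hsx⟩ := hs
    have hs0' : (0:ℝ) ≤ s := hs0.le
    have h1x : (1:ℝ) ≤ 1 + x := by linarith
    have hpow : ∀ a : ℕ, (1 + s) ^ a ≤ (1 + x) ^ a := fun a =>
      pow_le_pow_left₀ (by linarith) (by linarith) a
    have h1 : |laguerre m (i - 1) s| ≤ lagC m (i - 1) * (1 + x) ^ (i - 1) :=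
      (laguerre_bound m (i-1) hs0').trans
        (mul_le_mul_of_nonneg_left (hpow _) (lagC_nonneg _ _))
    have h2 : |laguerre m (j - 1) s| ≤ lagC m (j - 1) * (1 + x) ^ (j - 1) :=
      (laguerre_bound m (j-1) hs0').trans
        (mul_le_mul_of_nonneg_left (hpow _) (lagC_nonneg _ _))
    have h3 : s ^ m ≤ (1 + x) ^ m :=
      (pow_le_pow_left₀ hs0' (by linarith) m)
    rw [Real.norm_eq_abs, abs_mul, abs_mul, abs_mul,
      abs_of_nonneg (Real.exp_pos s).le, abs_pow, abs_of_nonneg hs0']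
    have : s ^ m * |laguerre m (i - 1) s| * |laguerre m (j - 1) s|
        ≤ (1 + x) ^ m * (lagC m (i - 1) * (1 + x) ^ (i - 1)) *
          (lagC m (j - 1) * (1 + x) ^ (j - 1)) := by
      have hA : (0:ℝ) ≤ (1 + x) ^ m := pow_nonneg (by linarith) m
      apply mul_le_mul (mul_le_mul h3 h1 (abs_nonneg _) hA) h2 (abs_nonneg _)
        (mul_nonneg hA (mul_nonneg (lagC_nonneg _ _) (pow_nonneg (by linarith) _)))
    calc s ^ m * |laguerre m (i - 1) s| * |laguerre m (j - 1) s| * Real.exp s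
        ≤ (1 + x) ^ m * (lagC m (i - 1) * (1 + x) ^ (i - 1)) *
          (lagC m (j - 1) * (1 + x) ^ (j - 1)) * Real.exp s := by
          exact mul_le_mul_of_nonneg_right this (Real.exp_pos s).le
      _ = C * (1 + x) ^ (m + (i-1) + (j-1)) * Real.exp s := by
          rw [pow_add, pow_add]; ring
      _ = C * (1 + x) ^ d * Real.exp s := by rw [hd]
  have hint : IntervalIntegrable (fun s => C * (1 + x) ^ d * Real.exp s)
      MeasureTheory.volume 0 x := (by continuity : Continuous _).intervalIntegrable _ _
  have hnorm : ‖∫ s in (0:ℝ)..x,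
      s ^ m * laguerre m (i - 1) s * laguerre m (j - 1) s * Real.exp s‖
      ≤ C * (1 + x) ^ d * (Real.exp x - Real.exp 0) := by
    have := intervalIntegral.norm_integral_le_abs_of_norm_le (μ := MeasureTheory.volume)
      (a := (0:ℝ)) (b := x)
      (f := fun s => s ^ m * laguerre m (i - 1) s * laguerre m (j - 1) s * Real.exp s)
      (g := fun s => C * (1 + x) ^ d * Real.exp s)
      ((MeasureTheory.ae_restrict_iff' measurableSet_uIoc).mpr
        (Filter.Eventually.of_forall hbound)) hint
    calc ‖∫ s in (0:ℝ)..x, s ^ m * laguerre m (i-1) s * laguerre m (j-1) s * Real.exp s‖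
        ≤ |∫ s in (0:ℝ)..x, C * (1 + x) ^ d * Real.exp s| := this
      _ = |C * (1 + x) ^ d * (Real.exp x - Real.exp 0)| := by
          rw [intervalIntegral.integral_const_mul, integral_exp]
      _ = C * (1 + x) ^ d * (Real.exp x - Real.exp 0) :=
          abs_of_nonneg (mul_nonneg (mul_nonneg hC0 (pow_nonneg (by linarith) d))
            (by rw [Real.exp_zero]; linarith [Real.one_le_exp hx0]))
  have h1xb : (1 + x) ^ d ≤ b ^ d := by
    apply pow_le_pow_left₀ (by linarith) (by rw [hx]; linarith)
  have hb0 : (0:ℝ) ≤ b := by linarith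
  rw [Real.norm_eq_abs, Real.norm_eq_abs, abs_mul,
    abs_of_nonneg (Real.exp_pos _).le, abs_of_nonneg (pow_nonneg hb0 d)]
  calc Real.exp (-(b/2)) * |∫ s in (0:ℝ)..x,
        s ^ m * laguerre m (i-1) s * laguerre m (j-1) s * Real.exp s|
      ≤ Real.exp (-x) * (C * (1 + x) ^ d * (Real.exp x - Real.exp 0)) := by
        apply mul_le_mul_of_nonneg_left hnorm (Real.exp_pos _).le
    _ ≤ Real.exp (-x) * (C * (1 + x) ^ d * Real.exp x) := by
        apply mul_le_mul_of_nonneg_left _ (Real.exp_pos _).le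
        apply mul_le_mul_of_nonneg_left _ (by positivity)
        nlinarith [Real.exp_pos (0:ℝ), Real.exp_zero]
    _ = C * (1 + x) ^ d := by
        rw [Real.exp_neg]; field_simp
    _ ≤ C * b ^ d := mul_le_mul_of_nonneg_left h1xb hC0
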